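/- arXiv:2502.06790 — 2 statements merged into one kernel-verified Lean document; each statement's English description precedes it below -/
import Mathlib

section
/- Every blocked chain of domino tiles has total pip sum at least 42. -/
/-- A domino tile is an unordered pair of values in `{0,…,6}`. -/
abbrev Tile := Sym2 (Fin 7)

/-- The pip sum of the tile `[a,b]` is `a + b`. -/
def pips (t : Tile) : ℕ :=
  Sym2.lift ⟨fun (a b : Fin 7) => (a : ℕ) + (b : ℕ), fun a b => Nat.add_comm a b⟩ t

/-- A chain of domino tiles: a nonempty finite sequence of oriented tiles
`(a₁,b₁),…,(aₙ,bₙ)` whose underlying unordered tiles are pairwise distinct and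
which satisfies `bᵢ = aᵢ₊₁` for all `1 ≤ i < n`. -/
structure DChain where
  tiles : List (Fin 7 × Fin 7)
  ne : tiles ≠ []
  nodup : (tiles.map fun p => Sym2.mk p.1 p.2).Nodup
  linked : tiles.Chain' fun p q => p.2 = q.1

/-- The left end `a₁` of a chain. -/
def DChain.left (C : DChain) : Fin 7 := (C.tiles.head C.ne).1

/-- The right end `bₙ` of a chain. -/
def DChain.right (C : DChain) : Fin 7 := (C.tiles.getLast C.ne).2

/-- The `2n` entries `a₁,b₁,a₂,b₂,…,aₙ,bₙ` of a chain. -/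
def DChain.entries (C : DChain) : List (Fin 7) := C.tiles.flatMap fun p => [p.1, p.2]

/-- The underlying (unordered) tiles of a chain. -/
def DChain.tileList (C : DChain) : List Tile := C.tiles.map fun p => Sym2.mk p.1 p.2

/-- The total pip sum of a chain. -/
def DChain.pipsSum (C : DChain) : ℕ := (C.tiles.map fun p => (p.1 : ℕ) + (p.2 : ℕ)).sum

/-- A chain is blocked if no domino tile outside the chain contains its left end,
and no domino tile outside the chain contains its right end. -/
def DChain.Blocked (C : DChain) : Prop :=
  ∀ t : Tile, t ∉ C.tileList → C.left ∉ t ∧ C.right ∉ t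

/-!
All seven tiles containing the left end `ℓ` of a blocked chain lie in the chain, so `ℓ` occurs
exactly `7 + 1 = 8` times among the entries (the double `[ℓ,ℓ]` counts twice). Along a chain
every value occurs an even number of times among the entries, once its occurrences at the two
ends are added; hence the right end is `ℓ` as well, and then every value occurs an even number
of times. Every value `k` occurs at least once, in the tile `[ℓ,k]`, hence at least twice, and
the pip sum is at least `2 · (0 + 1 + ⋯ + 6) = 42`.
-/

open Finset

theorem Sym2.count_toMultiset_mk_left {α : Type*} [DecidableEq α] (a b : α) :
    s(a, b).toMultiset.count a = 1 + if a = b then 1 else 0 := by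
  by_cases h : a = b <;> simp [Sym2.toMultiset, h]

theorem Sym2.sum_count_toMultiset {α : Type*} [Fintype α] [DecidableEq α] (a : α) :
    ∑ t : Sym2 α, t.toMultiset.count a = Fintype.card α + 1 := by
  calc ∑ t : Sym2 α, t.toMultiset.count a = ∑ b : α, s(a, b).toMultiset.count a := by
        symm
        refine sum_bij_ne_zero (fun b _ _ => s(a, b)) (by simp)
          (fun _ _ _ _ _ _ h => Sym2.congr_right.mp h) ?_ (fun _ _ _ => rfl)
        intro t _ ht
        obtain ⟨b, rfl⟩ := Sym2.mem_iff_exists.mp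
          (Sym2.mem_toMultiset.mp (Multiset.count_ne_zero.mp ht))
        exact ⟨b, mem_univ _, ht, rfl⟩
    _ = Fintype.card α + 1 := by
        simp [Sym2.count_toMultiset_mk_left, sum_add_distrib]

namespace List

variable {α : Type*}

theorem mem_flatMap_pair_of_mem_map_mk {l : List (α × α)} {a : α} {t : Sym2 α}
    (ht : t ∈ l.map fun p => s(p.1, p.2)) (ha : a ∈ t) : a ∈ l.flatMap fun p => [p.1, p.2] := by
  obtain ⟨p, hp, rfl⟩ := mem_map.mp ht
  exact mem_flatMap.mpr ⟨p, hp, by simpa using ha⟩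

variable [DecidableEq α]

theorem count_flatMap_pair (l : List (α × α)) (a : α) :
    (l.flatMap fun p => [p.1, p.2]).count a
      = ((l.map fun p => s(p.1, p.2)).map fun t => t.toMultiset.count a).sum := by
  rw [count_flatMap, map_map]
  congr 1
  exact map_congr_left fun p _ => by simp [Sym2.toMultiset]

theorem count_flatMap_pair_eq_card_add_one [Fintype α] {l : List (α × α)} (a : α)
    (hnodup : (l.map fun p => s(p.1, p.2)).Nodup)
    (hmem : ∀ t : Sym2 α, a ∈ t → t ∈ l.map fun p => s(p.1, p.2)) :
    (l.flatMap fun p => [p.1, p.2]).count a = Fintype.card α + 1 := by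
  rw [count_flatMap_pair, ← sum_toFinset _ hnodup, ← Sym2.sum_count_toMultiset a]
  refine sum_subset (subset_univ _) fun t _ ht => Multiset.count_eq_zero.mpr fun hat => ?_
  exact ht (mem_toFinset.mpr (hmem t (Sym2.mem_toMultiset.mp hat)))

theorem even_count_flatMap_pair_add_ends (a : α) :
    ∀ (l : List (α × α)) (hl : l ≠ []), l.IsChain (fun p q => p.2 = q.1) →
      Even ((l.flatMap fun p => [p.1, p.2]).count a
        + (if (l.head hl).1 = a then 1 else 0) + (if (l.getLast hl).2 = a then 1 else 0))
  | [p], _, _ => by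
    by_cases h1 : p.1 = a <;> by_cases h2 : p.2 = a <;> simp [h1, h2, Nat.even_iff]
  | p :: q :: t, _, hc => by
    obtain ⟨hpq, hc⟩ := isChain_cons_cons.mp hc
    obtain ⟨m, hm⟩ := even_count_flatMap_pair_add_ends a (q :: t) (cons_ne_nil q t) hc
    have hcount : ((p :: q :: t).flatMap fun p => [p.1, p.2]).count a
        = (if p.1 = a then 1 else 0) + (if q.1 = a then 1 else 0)
          + ((q :: t).flatMap fun p => [p.1, p.2]).count a := by
      simp only [flatMap_cons, count_append, count_cons, count_nil, beq_iff_eq, hpq]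
      omega
    rw [hcount, head_cons, getLast_cons (cons_ne_nil q t)]
    rw [head_cons] at hm
    -- prepending `p` adds the entries `p.1`, `p.2 = q.1` and moves the left end from `q.1` to `p.1`
    exact ⟨m + if p.1 = a then 1 else 0, by omega⟩

theorem sum_map_add_eq_sum_count [Fintype α] (l : List (α × α)) (f : α → ℕ) :
    (l.map fun p => f p.1 + f p.2).sum = ∑ k, (l.flatMap fun p => [p.1, p.2]).count k * f k := by
  have hflat :
      (l.map fun p => f p.1 + f p.2).sum = ((l.flatMap fun p => [p.1, p.2]).map f).sum := by
    induction l with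
    | nil => rfl
    | cons p l ih => simp [ih, add_assoc]
  rw [hflat, sum_list_map_count]
  refine sum_subset (subset_univ _) fun k _ hk => ?_
  rw [count_eq_zero_of_not_mem (mt mem_toFinset.mpr hk), zero_smul]

end List

namespace DChain

theorem even_count_entries_add_ends (C : DChain) (k : Fin 7) :
    Even (C.entries.count k + (if C.left = k then 1 else 0) + (if C.right = k then 1 else 0)) :=
  List.even_count_flatMap_pair_add_ends k C.tiles C.ne C.linked

variable {C : DChain}

theorem Blocked.mem_tileList (h : C.Blocked) {t : Tile} (ht : C.left ∈ t) : t ∈ C.tileList :=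
  not_not.mp fun hn => (h t hn).1 ht

theorem Blocked.count_left_entries (h : C.Blocked) : C.entries.count C.left = 8 :=
  List.count_flatMap_pair_eq_card_add_one _ C.nodup fun _ => h.mem_tileList

theorem Blocked.right_eq_left (h : C.Blocked) : C.right = C.left := by
  obtain ⟨m, hm⟩ := C.even_count_entries_add_ends C.left
  rw [h.count_left_entries, if_pos rfl] at hm
  by_contra hne
  rw [if_neg hne] at hm
  omega

theorem Blocked.two_le_count_entries (h : C.Blocked) (k : Fin 7) : 2 ≤ C.entries.count k := by
  have hk : k ∈ C.entries :=
    List.mem_flatMap_pair_of_mem_map_mk (h.mem_tileList (Sym2.mem_mk_left C.left k))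
      (Sym2.mem_mk_right _ _)
  have hpos := List.count_pos_iff.mpr hk
  obtain ⟨m, hm⟩ := C.even_count_entries_add_ends k
  rw [h.right_eq_left] at hm
  split_ifs at hm <;> omega

theorem pipsSum_eq_sum_count (C : DChain) : C.pipsSum = ∑ k : Fin 7, C.entries.count k * k :=
  List.sum_map_add_eq_sum_count C.tiles Fin.val

end DChain

/-- Every blocked chain of domino tiles has total pip sum at least 42. -/
theorem blocked_pipsSum_ge_42 (C : DChain) (h : C.Blocked) : 42 ≤ C.pipsSum :=
  calc 42 = ∑ k : Fin 7, 2 * (k : ℕ) := rfl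
    _ ≤ ∑ k : Fin 7, C.entries.count k * k :=
      sum_le_sum fun k _ => Nat.mul_le_mul_right _ (h.two_le_count_entries k)
    _ = C.pipsSum := C.pipsSum_eq_sum_count.symm
end

section
/- Consider a minimal block (tranca mínima) and fix j ∈ {1,…,6}. If neither player of the losing team has, in their initial hand, any tile containing 0 nor any tile containing j, then at least one of the two losing players plays at least one tile during the game. -/
/-- The board: the chain of already played tiles, as a list of oriented tiles
concatenated left to right (consecutive tiles match end to end). -/
abbrev Board := List (Fin 7 × Fin 7)

/-- The total pip sum of the tiles on a board. -/
def boardPips (b : Board) : ℕ := (b.map fun p => (p.1 : ℕ) + (p.2 : ℕ)).sum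

/-- A tile `t` can extend a (nonempty) board `b` when `t` contains one of the two
open ends of `b`. -/
def canExtend (b : Board) (t : Tile) : Prop :=
  b ≠ [] ∧ (b.head!.1 ∈ t ∨ b.getLast!.2 ∈ t)

/-- The total pip sum of a hand of tiles. -/
def handPips (h : Finset Tile) : ℕ := ∑ t ∈ h, pips t

/-- A game state: the board of already played tiles, the four remaining hands, and
whose turn it is. -/
structure GState where
  board : Board
  hands : Fin 4 → Finset Tile
  turn : Fin 4

/-- Players `0` and `2` form team `false`; players `1` and `3` form team `true`. -/
def playerTeam (i : Fin 4) : Bool := decide ((i : ℕ) % 2 = 1)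

/-- The total pip sum remaining in the hands of the two players of a team. -/
def GState.teamPips (s : GState) (tm : Bool) : ℕ :=
  if tm then handPips (s.hands 1) + handPips (s.hands 3)
  else handPips (s.hands 0) + handPips (s.hands 2)

/-- A single legal move of the game (the game is still running, i.e. all hands are
nonempty).  The player to move either plays a tile from their hand — the first tile
played starts the chain, and every later tile is appended, suitably oriented, to one
of the two open ends of the chain — or passes, which is permitted only if no tile
remaining in their hand contains either open end of the chain. -/
inductive Step : GState → GState → Prop
  | playFirst (s : GState) (p : Fin 7 × Fin 7)
      (hrun : ∀ i, s.hands i ≠ ∅)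
      (hb : s.board = [])
      (ht : Sym2.mk p.1 p.2 ∈ s.hands s.turn) :
      Step s ⟨[p],
        Function.update s.hands s.turn ((s.hands s.turn).erase (Sym2.mk p.1 p.2)),
        s.turn + 1⟩
  | playLeft (s : GState) (p : Fin 7 × Fin 7)
      (hrun : ∀ i, s.hands i ≠ ∅)
      (hb : s.board ≠ [])
      (ht : Sym2.mk p.1 p.2 ∈ s.hands s.turn)
      (hfit : p.2 = s.board.head!.1) :
      Step s ⟨p :: s.board,
        Function.update s.hands s.turn ((s.hands s.turn).erase (Sym2.mk p.1 p.2)),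
        s.turn + 1⟩
  | playRight (s : GState) (p : Fin 7 × Fin 7)
      (hrun : ∀ i, s.hands i ≠ ∅)
      (hb : s.board ≠ [])
      (ht : Sym2.mk p.1 p.2 ∈ s.hands s.turn)
      (hfit : p.1 = s.board.getLast!.2) :
      Step s ⟨s.board ++ [p],
        Function.update s.hands s.turn ((s.hands s.turn).erase (Sym2.mk p.1 p.2)),
        s.turn + 1⟩
  | pass (s : GState)
      (hrun : ∀ i, s.hands i ≠ ∅)
      (hb : s.board ≠ [])
      (hcant : ∀ t ∈ s.hands s.turn, ¬ canExtend s.board t) :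
      Step s ⟨s.board, s.hands, s.turn + 1⟩

/-- A four-player partnership domino game: a partition of the 28 domino tiles into
four initial hands of 7 tiles each, together with a legal play sequence of states;
player 1 (index `0`) moves first, and players move cyclically. -/
structure Game where
  initHands : Fin 4 → Finset Tile
  card_initHands : ∀ i, (initHands i).card = 7
  disj_initHands : ∀ i j, i ≠ j → Disjoint (initHands i) (initHands j)
  cover_initHands : ∀ t : Tile, ∃ i, t ∈ initHands i
  states : List GState
  states_ne : states ≠ []
  head_states : states.head states_ne = ⟨[], initHands, 0⟩
  chain_states : states.Chain' Step

/-- The final position of a game. -/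
def Game.finalState (g : Game) : GState := g.states.getLast g.states_ne

/-- A position is blocked if at least one tile has been played and no player's
remaining hand contains a tile containing either open end of the chain. -/
def IsBlocked (s : GState) : Prop :=
  s.board ≠ [] ∧ ∀ i : Fin 4, ∀ t ∈ s.hands i, ¬ canExtend s.board t

/-- A game ends blocked if its final position is blocked. -/
def Game.EndsBlocked (g : Game) : Prop := IsBlocked g.finalState

/-- Team `tm` plays at least one tile during the game: at some turn the player to move
belongs to team `tm` and the board changes (a tile is placed). -/
def Game.teamPlays (g : Game) (tm : Bool) : Prop :=
  ∃ (i : ℕ) (h : i + 1 < g.states.length),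
    playerTeam ((g.states.get ⟨i, by omega⟩).turn) = tm ∧
    (g.states.get ⟨i + 1, h⟩).board ≠ (g.states.get ⟨i, by omega⟩).board

/-! If the losing team never plays, its fourteen tiles stay in hand, while in a blocked position
every tile showing an open end has been played; so an open end shows eight times on the board.
Along a chain the values at the inner joints pair up, so a value appears an odd number of times on
the board exactly when it sits at one open end only; hence both ends carry the same value `e`. Every
other value `v` is then shown on the played tile `[e,v]`, hence at least twice, and the pip sum is
at least `8e + 2(21 - e) = 42 + 6e`. A pip sum of 42 forces `e = 0` and every nonzero value to
appear exactly twice, so ten tiles were played. Yet besides the seven tiles containing 0 the board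
holds at most one tile containing `j` (which shows only twice, once on `[0,j]`) and at most one tile
avoiding both 0 and `j` (fourteen of the fifteen such tiles are in the losers' hands). -/
open Finset

section TileValues

variable {α : Type*}

lemma Sym2.toMultiset_mk (a b : α) : s(a, b).toMultiset = {a, b} := rfl

variable [DecidableEq α]

lemma Sym2.count_toMultiset_mk (v a b : α) :
    s(a, b).toMultiset.count v = (if v = a then 1 else 0) + (if v = b then 1 else 0) := by
  rw [Sym2.toMultiset_mk, Multiset.insert_eq_cons, Multiset.count_cons, Multiset.count_singleton]
  omega

lemma sum_count_bind_toMultiset [Fintype α] (T : Multiset (Sym2 α)) :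
    ∑ v, (T.bind Sym2.toMultiset).count v = 2 * Multiset.card T := by
  rw [Multiset.sum_count_eq_card (fun a _ => mem_univ a), Multiset.card_bind]
  simp [Sym2.card_toMultiset, mul_comm]

lemma count_bind_toMultiset_val (B : Finset (Sym2 α)) (v : α) :
    (B.val.bind Sym2.toMultiset).count v = ∑ t ∈ B, t.toMultiset.count v :=
  Multiset.count_bind

lemma card_filter_mem_le_count (B : Finset (Sym2 α)) (v : α) :
    #(B.filter (v ∈ ·)) ≤ (B.val.bind Sym2.toMultiset).count v := by
  rw [count_bind_toMultiset_val, card_filter]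
  refine sum_le_sum fun t _ => ?_
  split_ifs with h
  · exact Multiset.one_le_count_iff_mem.2 (Sym2.mem_toMultiset.2 h)
  · exact Nat.zero_le _

end TileValues

lemma sum_map_val_eq_sum_count {n : ℕ} (M : Multiset (Fin n)) :
    (M.map (↑)).sum = ∑ v : Fin n, (v : ℕ) * M.count v := by
  induction M using Multiset.induction_on with
  | empty => simp
  | cons a M ih => simp [ih, Multiset.count_cons, mul_add, sum_add_distrib, add_comm]

lemma sum_count_toMultiset_tile (v : Fin 7) : ∑ t : Tile, t.toMultiset.count v = 8 := by
  revert v; decide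

lemma count_bind_toMultiset_eq_eight {B : Finset Tile} {v : Fin 7}
    (hB : ∀ t : Tile, v ∈ t → t ∈ B) : (B.val.bind Sym2.toMultiset).count v = 8 := by
  rw [count_bind_toMultiset_val, ← sum_count_toMultiset_tile v]
  refine sum_subset (subset_univ B) fun t _ ht => ?_
  exact Multiset.count_eq_zero.2 fun h => ht (hB t (Sym2.mem_toMultiset.1 h))

def boardTiles (b : Board) : Multiset Tile := ↑(b.map fun p => s(p.1, p.2))

@[simp]
lemma boardTiles_cons (p : Fin 7 × Fin 7) (b : Board) :
    boardTiles (p :: b) = s(p.1, p.2) ::ₘ boardTiles b := rfl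

lemma boardTiles_append_singleton (b : Board) (p : Fin 7 × Fin 7) :
    boardTiles (b ++ [p]) = s(p.1, p.2) ::ₘ boardTiles b := by
  simp [boardTiles, ← Multiset.coe_add, add_comm]

lemma boardPips_eq_sum_count (b : Board) :
    boardPips b = ∑ v : Fin 7, (v : ℕ) * ((boardTiles b).bind Sym2.toMultiset).count v := by
  rw [← sum_map_val_eq_sum_count]
  induction b with
  | nil => rfl
  | cons p b ih => simp [boardPips, Sym2.toMultiset_mk] at ih ⊢; rw [ih]; ring

lemma count_boardTiles_bind_mod_two (v : Fin 7) :
    ∀ b : Board, b ≠ [] → b.IsChain (fun p q => p.2 = q.1) →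
      ((boardTiles b).bind Sym2.toMultiset).count v % 2 =
        ((if v = b.head!.1 then 1 else 0) + (if v = b.getLast!.2 then 1 else 0)) % 2
  | [p], _, _ => by simp [Sym2.count_toMultiset_mk]; rfl
  | p :: q :: l, _, h => by
    rw [List.isChain_cons_cons] at h
    have ih := count_boardTiles_bind_mod_two v (q :: l) (List.cons_ne_nil _ _) h.2
    have hlast : (p :: q :: l).getLast! = (q :: l).getLast! := by simp [List.getLast!]
    rw [List.head!_cons] at ih
    rw [boardTiles_cons, Multiset.cons_bind, Multiset.count_add, Sym2.count_toMultiset_mk, hlast,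
      List.head!_cons, h.1]
    omega

lemma sum_val_mul_ite_eight_two (e : Fin 7) :
    ∑ v : Fin 7, (v : ℕ) * (if v = e then 8 else 2) = 42 + 6 * e := by
  revert e; decide

lemma card_filter_zero_mem : #(univ.filter fun t : Tile => (0 : Fin 7) ∈ t) = 7 := by
  decide

lemma card_filter_zero_notMem_and_notMem {j : Fin 7} (hj : j ≠ 0) :
    #(univ.filter fun t : Tile => (0 : Fin 7) ∉ t ∧ j ∉ t) = 15 := by
  revert j; decide

section BlockedBoard

variable {B : Finset Tile}

lemma ends_eq_of_forall_mem {e₁ e₂ : Fin 7}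
    (hpar : ∀ v, (B.val.bind Sym2.toMultiset).count v % 2 =
      ((if v = e₁ then 1 else 0) + (if v = e₂ then 1 else 0)) % 2)
    (hends : ∀ t : Tile, e₁ ∈ t → t ∈ B) : e₁ = e₂ := by
  by_contra hne
  have h := hpar e₁
  rw [count_bind_toMultiset_eq_eight hends, if_pos rfl, if_neg hne] at h
  omega

lemma two_le_count_of_even {e v : Fin 7}
    (hpar : (B.val.bind Sym2.toMultiset).count v % 2 = 0)
    (hends : ∀ t : Tile, e ∈ t → t ∈ B) :
    2 ≤ (B.val.bind Sym2.toMultiset).count v := by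
  have hpos : 0 < #(B.filter (v ∈ ·)) := card_pos.2
    ⟨s(e, v), mem_filter.2 ⟨hends _ (Sym2.mem_mk_left e v), Sym2.mem_mk_right e v⟩⟩
  have h1 : 1 ≤ (B.val.bind Sym2.toMultiset).count v :=
    hpos.trans_le (card_filter_mem_le_count B v)
  omega

lemma end_eq_zero_of_sum_eq_42 {e : Fin 7}
    (hpar : ∀ v, v ≠ e → (B.val.bind Sym2.toMultiset).count v % 2 = 0)
    (hends : ∀ t : Tile, e ∈ t → t ∈ B)
    (hpips : ∑ v : Fin 7, (v : ℕ) * (B.val.bind Sym2.toMultiset).count v = 42) :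
    e = 0 ∧ ∀ v, v ≠ 0 → (B.val.bind Sym2.toMultiset).count v = 2 := by
  have hle : ∀ v ∈ (univ : Finset (Fin 7)),
      (v : ℕ) * (if v = e then 8 else 2) ≤ v * (B.val.bind Sym2.toMultiset).count v := by
    intro v _
    split_ifs with hv
    · rw [hv, count_bind_toMultiset_eq_eight hends]
    · exact Nat.mul_le_mul_left _ (two_le_count_of_even (hpar v hv) hends)
  have hsum := sum_le_sum hle
  rw [sum_val_mul_ite_eight_two, hpips] at hsum
  have he : e = 0 := Fin.ext (by simp only [Fin.val_zero]; omega)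
  refine ⟨he, fun v hv => ?_⟩
  have heq := (sum_eq_sum_iff_of_le hle).1 (by rw [sum_val_mul_ite_eight_two, hpips, he]; rfl)
    v (mem_univ v)
  rw [if_neg (he ▸ hv)] at heq
  exact (Nat.eq_of_mul_eq_mul_left (Nat.pos_of_ne_zero (Fin.val_ne_of_ne hv)) heq).symm

lemma card_eq_ten_of_count_eq_two (hends : ∀ t : Tile, (0 : Fin 7) ∈ t → t ∈ B)
    (hcount : ∀ v, v ≠ 0 → (B.val.bind Sym2.toMultiset).count v = 2) : #B = 10 := by
  have h := sum_count_bind_toMultiset B.val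
  rw [Fin.sum_univ_succ, count_bind_toMultiset_eq_eight hends,
    sum_congr rfl fun i _ => hcount _ (Fin.succ_ne_zero i)] at h
  simp only [sum_const, card_univ, Fintype.card_fin, smul_eq_mul, card_val] at h
  omega

lemma card_filter_notMem_zero_mem_le_one {j : Fin 7}
    (hends : ∀ t : Tile, (0 : Fin 7) ∈ t → t ∈ B)
    (hcount : (B.val.bind Sym2.toMultiset).count j = 2) :
    #(B.filter fun t => (0 : Fin 7) ∉ t ∧ j ∈ t) ≤ 1 := by
  have hsub :
      insert s(0, j) (B.filter fun t => (0 : Fin 7) ∉ t ∧ j ∈ t) ⊆ B.filter (j ∈ ·) := by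
    intro t ht
    rcases mem_insert.1 ht with rfl | ht
    · exact mem_filter.2 ⟨hends _ (Sym2.mem_mk_left 0 j), Sym2.mem_mk_right 0 j⟩
    · exact mem_filter.2 ⟨(mem_filter.1 ht).1, (mem_filter.1 ht).2.2⟩
  have := (card_le_card hsub).trans (card_filter_mem_le_count B j)
  rw [card_insert_of_notMem fun h => (mem_filter.1 h).2.1 (Sym2.mem_mk_left 0 j), hcount] at this
  omega

lemma not_disjoint_of_count_eq_two {j : Fin 7} (hj : j ≠ 0) {L : Finset Tile}
    (hends : ∀ t : Tile, (0 : Fin 7) ∈ t → t ∈ B)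
    (hcount : ∀ v, v ≠ 0 → (B.val.bind Sym2.toMultiset).count v = 2)
    (hL : #L = 14) (hLavoid : ∀ t ∈ L, (0 : Fin 7) ∉ t ∧ j ∉ t) : ¬ Disjoint L B := by
  intro hLB
  have hzero : #(B.filter ((0 : Fin 7) ∈ ·)) ≤ 7 :=
    (card_le_card (filter_subset_filter _ (subset_univ B))).trans_eq card_filter_zero_mem
  have hneither : #(B.filter fun t => (0 : Fin 7) ∉ t ∧ j ∉ t) ≤ 1 := by
    have hsub : L ∪ B.filter (fun t => (0 : Fin 7) ∉ t ∧ j ∉ t) ⊆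
        univ.filter fun t : Tile => (0 : Fin 7) ∉ t ∧ j ∉ t := by
      intro t ht
      rcases mem_union.1 ht with ht | ht
      · exact mem_filter.2 ⟨mem_univ t, hLavoid t ht⟩
      · exact mem_filter.2 ⟨mem_univ t, (mem_filter.1 ht).2⟩
    have := card_le_card hsub
    rw [card_union_of_disjoint (hLB.mono_right (filter_subset _ B)), hL,
      card_filter_zero_notMem_and_notMem hj] at this
    omega
  have hcover : B ⊆ B.filter ((0 : Fin 7) ∈ ·) ∪
      B.filter (fun t => (0 : Fin 7) ∉ t ∧ j ∈ t) ∪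
      B.filter (fun t => (0 : Fin 7) ∉ t ∧ j ∉ t) := by
    intro t ht
    simp only [mem_union, mem_filter, ht, true_and]
    tauto
  have := (card_le_card hcover).trans ((card_union_le _ _).trans
    (Nat.add_le_add_right (card_union_le _ _) _))
  have := card_eq_ten_of_count_eq_two hends hcount
  have := card_filter_notMem_zero_mem_le_one hends (hcount j hj)
  omega

end BlockedBoard

lemma cons_sum_val_update_erase {ι α : Type*} [Fintype ι] [DecidableEq ι] [DecidableEq α]
    (h : ι → Finset α) {k : ι} {t : α} (ht : t ∈ h k) :
    t ::ₘ ∑ i, (Function.update h k ((h k).erase t) i).val = ∑ i, (h i).val := by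
  rw [← add_sum_erase univ _ (mem_univ k),
    ← add_sum_erase univ (fun i => (h i).val) (mem_univ k),
    Function.update_self, ← Multiset.cons_add, erase_val, Multiset.cons_erase ht]
  congr 1
  exact sum_congr rfl fun i hi => by rw [Function.update_of_ne (ne_of_mem_erase hi)]

lemma boardTiles_eq_filter {s : GState}
    (h : boardTiles s.board + ∑ i, (s.hands i).val = (univ : Finset Tile).val) :
    boardTiles s.board = (univ.filter fun t : Tile => ∀ i, t ∉ s.hands i).val := by
  ext t
  have hcount := congrArg (Multiset.count t) h
  rw [Multiset.count_add, Multiset.count_sum', Multiset.count_eq_one_of_mem univ.nodup (mem_univ t)]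
    at hcount
  rw [Multiset.count_eq_of_nodup (nodup _)]
  simp only [mem_val, mem_filter, mem_univ, true_and]
  by_cases hfree : ∀ i, t ∉ s.hands i
  · rw [if_pos hfree]
    simp only [Multiset.count_eq_zero.2 (hfree _), sum_const_zero] at hcount
    omega
  · rw [if_neg hfree]
    obtain ⟨i, hi⟩ := not_forall_not.1 hfree
    have := single_le_sum (fun i _ => Nat.zero_le (Multiset.count t (s.hands i).val)) (mem_univ i)
    rw [Multiset.count_eq_one_of_mem (nodup _) hi] at this
    omega

lemma IsBlocked.notMem_hands {s : GState} (h : IsBlocked s) {t : Tile}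
    (ht : s.board.head!.1 ∈ t ∨ s.board.getLast!.2 ∈ t) (i : Fin 4) : t ∉ s.hands i :=
  fun hti => h.2 i t hti ⟨h.1, ht⟩

namespace Step

variable {s s' : GState}

lemma boardTiles_add_sum_hands (hs : Step s s') :
    boardTiles s'.board + ∑ i, (s'.hands i).val =
      boardTiles s.board + ∑ i, (s.hands i).val := by
  cases hs with
  | playFirst p _ hb ht =>
    rw [hb, boardTiles_cons, Multiset.cons_add, ← Multiset.add_cons,
      cons_sum_val_update_erase _ ht]
  | playLeft p _ _ ht _ =>
    rw [boardTiles_cons, Multiset.cons_add, ← Multiset.add_cons, cons_sum_val_update_erase _ ht]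
  | playRight p _ _ ht _ =>
    rw [boardTiles_append_singleton, Multiset.cons_add, ← Multiset.add_cons,
      cons_sum_val_update_erase _ ht]
  | pass => rfl

lemma isChain_board (hs : Step s s') (h : s.board.IsChain fun p q => p.2 = q.1) :
    s'.board.IsChain fun p q => p.2 = q.1 := by
  cases hs with
  | playFirst p => exact List.isChain_singleton p
  | playLeft p _ hb _ hfit =>
    obtain ⟨q, b, hqb⟩ := List.exists_cons_of_ne_nil hb
    rw [hqb] at h hfit
    exact hqb ▸ List.isChain_cons_cons.2 ⟨hfit, h⟩
  | playRight p _ hb _ hfit =>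
    refine List.isChain_append.2 ⟨h, List.isChain_singleton p, fun x hx y hy => ?_⟩
    rw [List.getLast?_eq_some_getLast hb, Option.mem_some_iff] at hx
    rw [List.head?_cons, Option.mem_some_iff] at hy
    rw [← hx, ← hy, hfit, List.getLast!_of_getLast? (List.getLast?_eq_some_getLast hb)]
  | pass => exact h

lemma hands_eq_of_ne_turn (hs : Step s s') {i : Fin 4} (hi : i ≠ s.turn) :
    s'.hands i = s.hands i := by
  cases hs <;> simp [Function.update_of_ne hi]

lemma hands_eq_of_board_eq (hs : Step s s') (hb : s'.board = s.board) : s'.hands = s.hands := by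
  cases hs with
  | playFirst p _ hb' => simp [hb'] at hb
  | playLeft p => exact absurd hb (List.cons_ne_self p _)
  | playRight p => simpa using congrArg List.length hb
  | pass => rfl

end Step

namespace Game

variable (g : Game)

lemma finalState_induction {r : GState → GState → Prop} (hr : g.states.IsChain r)
    (p : GState → Prop) (carries : ∀ ⦃s s'⦄, r s s' → p s → p s')
    (initial : p ⟨[], g.initHands, 0⟩) : p g.finalState :=
  hr.induction p g.states carries (fun _ => g.head_states ▸ initial) _ (List.getLast_mem _)

lemma boardTiles_add_sum_hands_finalState :
    boardTiles g.finalState.board + ∑ i, (g.finalState.hands i).val =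
      (univ : Finset Tile).val := by
  refine g.finalState_induction g.chain_states _
    (fun _ _ hs h => hs.boardTiles_add_sum_hands.trans h) ?_
  have hunion : univ.disjiUnion g.initHands (fun i _ j _ hij => g.disj_initHands i j hij) = univ :=
    eq_univ_of_forall fun t =>
      let ⟨i, hi⟩ := g.cover_initHands t
      mem_disjiUnion.2 ⟨i, mem_univ i, hi⟩
  exact (zero_add _).trans (congrArg Finset.val hunion)

lemma isChain_board_finalState : g.finalState.board.IsChain fun p q => p.2 = q.1 :=
  g.finalState_induction g.chain_states _ (fun _ _ hs => hs.isChain_board) List.isChain_nil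

variable {g}

lemma isChain_of_not_teamPlays {tm : Bool} (h : ¬ g.teamPlays tm) :
    g.states.IsChain fun s s' => Step s s' ∧ (playerTeam s.turn = tm → s'.board = s.board) := by
  have hchain : g.states.IsChain Step := g.chain_states
  rw [List.isChain_iff_getElem] at hchain ⊢
  intro i hi
  refine ⟨hchain i hi, fun hturn => ?_⟩
  by_contra hne
  exact h ⟨i, hi, hturn, hne⟩

lemma hands_finalState_of_not_teamPlays {tm : Bool} (h : ¬ g.teamPlays tm) {i : Fin 4}
    (hi : playerTeam i = tm) : g.finalState.hands i = g.initHands i := by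
  refine g.finalState_induction (isChain_of_not_teamPlays h) (fun s => s.hands i = g.initHands i)
    (fun s s' ⟨hs, hboard⟩ hinit => ?_) rfl
  by_cases hturn : i = s.turn
  · rw [hs.hands_eq_of_board_eq (hboard (hturn ▸ hi)), hinit]
  · rw [hs.hands_eq_of_ne_turn hturn, hinit]

def teamHand (g : Game) (tm : Bool) : Finset Tile :=
  (univ.filter fun i => playerTeam i = tm).biUnion g.initHands

lemma mem_teamHand {tm : Bool} {t : Tile} :
    t ∈ g.teamHand tm ↔ ∃ i, playerTeam i = tm ∧ t ∈ g.initHands i := by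
  simp [teamHand]

lemma card_teamHand (tm : Bool) : #(g.teamHand tm) = 14 := by
  rw [teamHand, card_biUnion fun i _ i' _ hii' => g.disj_initHands i i' hii',
    sum_congr rfl fun i _ => g.card_initHands i, sum_const, smul_eq_mul]
  cases tm <;> rfl

end Game

theorem minimal_block_loser_avoids_zero_and_j_plays_general (g : Game) (tm : Bool)
    (j : Fin 7) (hj : j ≠ 0)
    (hblocked : g.EndsBlocked)
    (hmin : boardPips g.finalState.board = 42)
    (hhands : ∀ i : Fin 4, playerTeam i = !tm →
      ∀ t ∈ g.initHands i, (0 : Fin 7) ∉ t ∧ j ∉ t) :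
    g.teamPlays (!tm) := by
  by_contra hplay
  set s := g.finalState
  set B := univ.filter fun t : Tile => ∀ i, t ∉ s.hands i
  have hB : boardTiles s.board = B.val :=
    boardTiles_eq_filter g.boardTiles_add_sum_hands_finalState
  have hends : ∀ t : Tile, s.board.head!.1 ∈ t → t ∈ B :=
    fun t ht => mem_filter.2 ⟨mem_univ t, hblocked.notMem_hands (Or.inl ht)⟩
  have hpar := fun v =>
    count_boardTiles_bind_mod_two v s.board hblocked.1 g.isChain_board_finalState
  simp only [hB] at hpar
  have he := ends_eq_of_forall_mem hpar hends
  obtain ⟨he0, hcount⟩ :=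
    end_eq_zero_of_sum_eq_42 (fun v hv => by rw [hpar v, ← he, if_neg hv])
    hends (by rw [← hB, ← boardPips_eq_sum_count]; exact hmin)
  refine not_disjoint_of_count_eq_two hj (he0 ▸ hends) hcount (g.card_teamHand (!tm))
    (fun t ht => ?_) (disjoint_left.2 fun t ht htB => ?_) <;>
    obtain ⟨i, hi, ht⟩ := Game.mem_teamHand.1 ht
  · exact hhands i hi t ht
  · exact (mem_filter.1 htB).2 i (Game.hands_finalState_of_not_teamPlays hplay hi ▸ ht)

/-- Consider a minimal block (tranca mínima) and fix a nonzero value `j`.  If neither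
player of the losing team has, in their initial hand, any tile containing 0 nor any
tile containing `j`, then at least one of the two losing players plays at least one
tile during the game. -/
theorem minimal_block_loser_avoids_zero_and_j_plays (g : Game) (tm : Bool)
    (j : Fin 7) (hj : j ≠ 0)
    (hblocked : g.EndsBlocked)
    (hmin : boardPips g.finalState.board = 42)
    (hwin : g.finalState.teamPips tm < g.finalState.teamPips (!tm))
    (hhands : ∀ i : Fin 4, playerTeam i = !tm →
      ∀ t ∈ g.initHands i, (0 : Fin 7) ∉ t ∧ j ∉ t) :
    g.teamPlays (!tm) :=
  minimal_block_loser_avoids_zero_and_j_plays_general g tm j hj hblocked hmin hhands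
end
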